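/- For b ∈ [0,1], define ρ_b : [0,1] → ℝ by ρ_b(t) = (1−t²)^{−1/2} for 0 ≤ t ≤ b/√(1+b²), ρ_b(t) = (1+b)/(t + √(1−t²)) for b/√(1+b²) ≤ t ≤ 1/√(1+b²), and ρ_b(t) = 1/t for 1/√(1+b²) ≤ t ≤ 1. Then ∫₀¹ (1−t²)·ρ_b(t)⁵ dt = (1 + 5b − b⁵)/4. -/

import Mathlib

open Set

/-- The radial profile of the body `K_b` in `ℝ⁶`, obtained by revolving an octagon:
`ρ_b(t) = (1−t²)^{−1/2}` for `0 ≤ t ≤ b/√(1+b²)`,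
`ρ_b(t) = (1+b)/(t + √(1−t²))` for `b/√(1+b²) ≤ t ≤ 1/√(1+b²)`, and
`ρ_b(t) = 1/t` for `1/√(1+b²) ≤ t ≤ 1`. -/
noncomputable def ρOct (b t : ℝ) : ℝ :=
  if t ≤ b / Real.sqrt (1 + b ^ 2) then (Real.sqrt (1 - t ^ 2))⁻¹
  else if t ≤ (Real.sqrt (1 + b ^ 2))⁻¹ then (1 + b) / (t + Real.sqrt (1 - t ^ 2))
  else t⁻¹

lemma hasDerivAt_sOct {t : ℝ} (h : t ^ 2 < 1) :
    HasDerivAt (fun u : ℝ => Real.sqrt (1 - u ^ 2)) (-t / Real.sqrt (1 - t ^ 2)) t := by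
  have h1 : HasDerivAt (fun u : ℝ => 1 - u ^ 2) (-(2 * t)) t := by
    simpa using (hasDerivAt_pow 2 t).const_sub 1
  have h2 := (Real.hasDerivAt_sqrt (by nlinarith : (1 : ℝ) - t ^ 2 ≠ 0)).comp t h1
  refine h2.congr_deriv (Eq.symm ?_)
  field_simp

lemma dOct1 {t : ℝ} (h : t ^ 2 < 1) :
    HasDerivAt (fun u : ℝ => u / Real.sqrt (1 - u ^ 2))
      ((1 - t ^ 2) * ((Real.sqrt (1 - t ^ 2))⁻¹) ^ 5) t := by
  have h0 : (0:ℝ) < 1 - t ^ 2 := by nlinarith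
  have hS : 0 < Real.sqrt (1 - t ^ 2) := Real.sqrt_pos.2 h0
  have hS2 : Real.sqrt (1 - t ^ 2) ^ 2 = 1 - t ^ 2 := Real.sq_sqrt h0.le
  have := (hasDerivAt_id t).div (hasDerivAt_sOct h) hS.ne'
  refine this.congr_deriv (Eq.symm ?_)
  field_simp
  simp only [id_eq]
  linear_combination (-(Real.sqrt (1 - t^2))^2 - 1) * hS2

lemma dOct2 {b t : ℝ} (h : t ^ 2 < 1) (hp : 0 < t + Real.sqrt (1 - t ^ 2)) :
    HasDerivAt (fun u : ℝ => -((1 + b) ^ 5 * (1 - u ^ 2) ^ 2 / (4 * (u + Real.sqrt (1 - u ^ 2)) ^ 4)))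
      ((1 - t ^ 2) * ((1 + b) / (t + Real.sqrt (1 - t ^ 2))) ^ 5) t := by
  have h0 : (0:ℝ) < 1 - t ^ 2 := by nlinarith
  set S := Real.sqrt (1 - t ^ 2) with hSdef
  have hS : 0 < S := Real.sqrt_pos.2 h0
  have hS2 : S ^ 2 = 1 - t ^ 2 := Real.sq_sqrt h0.le
  have hw : HasDerivAt (fun u : ℝ => (Real.sqrt (1 - u ^ 2) - u) / (u + Real.sqrt (1 - u ^ 2)))
      (-2 / (S * (t + S) ^ 2)) t := by
    have hnum : HasDerivAt (fun u : ℝ => Real.sqrt (1 - u ^ 2) - u) (-t / S - 1) t :=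
      (hasDerivAt_sOct h).sub (hasDerivAt_id t)
    have hden : HasDerivAt (fun u : ℝ => u + Real.sqrt (1 - u ^ 2)) (1 + -t / S) t :=
      (hasDerivAt_id t).add (hasDerivAt_sOct h)
    have := hnum.div hden hp.ne'
    refine this.congr_deriv (Eq.symm ?_)
    rw [← hSdef]
    field_simp
    linear_combination (2 : ℝ) * hS2
  have hG : HasDerivAt (fun u : ℝ =>
      -((1 + b) ^ 5 / 64) * (1 + (Real.sqrt (1 - u ^ 2) - u) / (u + Real.sqrt (1 - u ^ 2))) ^ 4)
      (-((1 + b) ^ 5 / 64) * (4 * (1 + (S - t) / (t + S)) ^ 3 * (-2 / (S * (t + S) ^ 2)))) t := by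
    exact (((hw.const_add 1).pow 4).const_mul _).congr_deriv (by ring)
  have heq : (fun u : ℝ =>
      -((1 + b) ^ 5 * (1 - u ^ 2) ^ 2 / (4 * (u + Real.sqrt (1 - u ^ 2)) ^ 4))) =ᶠ[nhds t]
      (fun u : ℝ =>
      -((1 + b) ^ 5 / 64) * (1 + (Real.sqrt (1 - u ^ 2) - u) / (u + Real.sqrt (1 - u ^ 2))) ^ 4) := by
    have h1 : ∀ᶠ u in nhds t, u ^ 2 < 1 :=
      ((continuous_pow 2).continuousAt (x := t)).eventually_lt continuousAt_const h
    have h2 : ∀ᶠ u in nhds t, 0 < u + Real.sqrt (1 - u ^ 2) := by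
      have hc : ContinuousAt (fun u : ℝ => u + Real.sqrt (1 - u ^ 2)) t := by fun_prop
      exact continuousAt_const.eventually_lt hc hp
    filter_upwards [h1, h2] with u hu1 hu2
    have hSu2 : Real.sqrt (1 - u ^ 2) ^ 2 = 1 - u ^ 2 := Real.sq_sqrt (by nlinarith)
    set Su := Real.sqrt (1 - u ^ 2)
    rw [← hSu2]
    field_simp
    ring
  have := hG.congr_of_eventuallyEq heq
  refine this.congr_deriv (Eq.symm ?_)
  rw [← hS2]
  field_simp
  ring

lemma dOct3 {t : ℝ} (h : t ≠ 0) :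
    HasDerivAt (fun u : ℝ => (2 * u ^ 2 - 1) / (4 * u ^ 4)) ((1 - t ^ 2) * (t⁻¹) ^ 5) t := by
  have hnum : HasDerivAt (fun u : ℝ => 2 * u ^ 2 - 1) (2 * (2 * t)) t := by
    simpa using (((hasDerivAt_pow 2 t).const_mul 2).sub_const 1)
  have hden : HasDerivAt (fun u : ℝ => 4 * u ^ 4) (4 * (4 * t ^ 3)) t := by
    simpa using ((hasDerivAt_pow 4 t).const_mul 4)
  have := hnum.div hden (by positivity)
  refine this.congr_deriv (Eq.symm ?_)
  field_simp
  ring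

set_option maxHeartbeats 1000000

lemma sOct_pos {t : ℝ} (h0 : 0 ≤ t) (h1 : t ≤ 1) : 0 < t + Real.sqrt (1 - t ^ 2) := by
  rcases h0.lt_or_eq with h | h
  · exact lt_of_lt_of_le h (le_add_of_nonneg_right (Real.sqrt_nonneg _))
  · rw [← h]; norm_num

/-- For `b ∈ [0,1]`, the quantity `h(1) = ∫₀¹ (1−t²)ρ_b(t)⁵ dt` of the
six-dimensional criterion equals `(1 + 5b − b⁵)/4`. -/
theorem octagon_h_integral (b : ℝ) (hb : b ∈ Icc (0 : ℝ) 1) :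
    (∫ t in (0 : ℝ)..1, (1 - t ^ 2) * ρOct b t ^ 5) = (1 + 5 * b - b ^ 5) / 4 := by
  obtain ⟨hb0, hb1⟩ := hb
  set r := Real.sqrt (1 + b ^ 2) with hrdef
  have hr2 : r ^ 2 = 1 + b ^ 2 := Real.sq_sqrt (by positivity)
  have hr0 : 0 < r := Real.sqrt_pos.2 (by positivity)
  have hr1 : 1 ≤ r := by nlinarith
  set c1 : ℝ := b / r with hc1def
  set c2 : ℝ := r⁻¹ with hc2def
  have hc10 : 0 ≤ c1 := by positivity
  have hc20 : 0 < c2 := by positivity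
  have hc12 : c1 ≤ c2 := by
    rw [hc1def, hc2def, div_le_iff₀ hr0]
    calc b ≤ 1 := hb1
    _ ≤ r⁻¹ * r := by rw [inv_mul_cancel₀ hr0.ne']
  have hc21 : c2 ≤ 1 := by
    rw [hc2def]
    exact inv_le_one_of_one_le₀ hr1
  have hc1lt1 : c1 < 1 := by
    rw [hc1def, div_lt_one hr0]
    nlinarith
  have h1c1 : 1 - c1 ^ 2 = (r⁻¹) ^ 2 := by
    rw [hc1def]
    field_simp
    linarith [hr2]
  have h1c2 : 1 - c2 ^ 2 = (b / r) ^ 2 := by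
    rw [hc2def]
    field_simp
    linarith [hr2]
  have hsc1 : Real.sqrt (1 - c1 ^ 2) = r⁻¹ := by
    rw [h1c1, Real.sqrt_sq (by positivity)]
  have hsc2 : Real.sqrt (1 - c2 ^ 2) = b / r := by
    rw [h1c2, Real.sqrt_sq (by positivity)]
  set f : ℝ → ℝ := fun t => (1 - t ^ 2) * ρOct b t ^ 5 with hfdef
  set g1 : ℝ → ℝ := fun t => (1 - t ^ 2) * ((Real.sqrt (1 - t ^ 2))⁻¹) ^ 5 with hg1def
  set g2 : ℝ → ℝ := fun t => (1 - t ^ 2) * ((1 + b) / (t + Real.sqrt (1 - t ^ 2))) ^ 5 with hg2def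
  set g3 : ℝ → ℝ := fun t => (1 - t ^ 2) * (t⁻¹) ^ 5 with hg3def
  -- pointwise identifications
  have e1 : EqOn f g1 (uIcc 0 c1) := by
    intro t ht
    rw [uIcc_of_le hc10] at ht
    have : t ≤ c1 := ht.2
    simp only [hfdef, hg1def, ρOct, ← hrdef, ← hc1def, if_pos this]
  have e2 : EqOn f g2 (uIcc c1 c2) := by
    intro t ht
    rw [uIcc_of_le hc12] at ht
    simp only [hfdef, hg2def, ρOct, ← hrdef, ← hc1def, ← hc2def]
    by_cases h : t ≤ c1
    · have ht1 : t = c1 := le_antisymm h ht.1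
      have hthis : c1 + r⁻¹ = (1 + b) / r := by rw [hc1def]; field_simp; ring
      have hb1r : (1 + b) ≠ 0 := by positivity
      have hval : ((1 + b) / (c1 + r⁻¹)) = (r⁻¹)⁻¹ := by
        rw [hthis, inv_inv]; field_simp
      rw [if_pos h, ht1, hsc1, hval]
    · rw [if_neg h, if_pos ht.2]
  have e3 : EqOn f g3 (uIcc c2 1) := by
    intro t ht
    rw [uIcc_of_le hc21] at ht
    simp only [hfdef, hg3def, ρOct, ← hrdef, ← hc1def, ← hc2def]
    by_cases h : t ≤ c1
    · have ht2 : t = c2 := le_antisymm (le_trans h hc12) ht.1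
      have hc12' : c1 = c2 := le_antisymm hc12 (ht2 ▸ h)
      have hbeq : b = 1 := by
        have h' := hc12'
        rw [hc1def, hc2def] at h'
        field_simp at h'
        linarith
      rw [if_pos h, ht2, hsc2]
      simp [hbeq, hc2def]
    · by_cases h2 : t ≤ c2
      · have ht2 : t = c2 := le_antisymm h2 ht.1
        have hthis : c2 + b / r = (1 + b) / r := by rw [hc2def]; field_simp
        have hb1r : (1 + b) ≠ 0 := by positivity
        have hval : (1 + b) / (c2 + b / r) = c2⁻¹ := by
          rw [hthis, hc2def, inv_inv]; field_simp
        rw [if_neg h, if_pos h2, ht2, hsc2, hval]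
      · rw [if_neg h, if_neg h2]
  -- continuity of the smooth pieces
  have hScont : Continuous fun t : ℝ => Real.sqrt (1 - t ^ 2) := by fun_prop
  have hg1c : ContinuousOn g1 (uIcc 0 c1) := by
    rw [uIcc_of_le hc10]
    apply ContinuousOn.mul (by fun_prop)
    apply ContinuousOn.pow
    apply ContinuousOn.inv₀ hScont.continuousOn
    intro x hx
    have : x ^ 2 < 1 := by nlinarith [hx.1, hx.2]
    exact (Real.sqrt_pos.2 (by linarith)).ne'
  have hg2c : ContinuousOn g2 (uIcc c1 c2) := by
    rw [uIcc_of_le hc12]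
    apply ContinuousOn.mul (by fun_prop)
    apply ContinuousOn.pow
    apply ContinuousOn.div continuousOn_const (by fun_prop)
    intro x hx
    exact (sOct_pos (le_trans hc10 hx.1) (le_trans hx.2 hc21)).ne'
  have hg3c : ContinuousOn g3 (uIcc c2 1) := by
    rw [uIcc_of_le hc21]
    apply ContinuousOn.mul (by fun_prop)
    apply ContinuousOn.pow
    apply ContinuousOn.inv₀ continuousOn_id
    intro x hx
    exact (lt_of_lt_of_le hc20 hx.1).ne'
  -- interval integrability of f on each piece
  have hi1 : IntervalIntegrable f MeasureTheory.volume 0 c1 := by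
    apply (hg1c.intervalIntegrable).congr
    exact fun t ht => (e1 (uIoc_subset_uIcc ht)).symm
  have hi2 : IntervalIntegrable f MeasureTheory.volume c1 c2 := by
    apply (hg2c.intervalIntegrable).congr
    exact fun t ht => (e2 (uIoc_subset_uIcc ht)).symm
  have hi3 : IntervalIntegrable f MeasureTheory.volume c2 1 := by
    apply (hg3c.intervalIntegrable).congr
    exact fun t ht => (e3 (uIoc_subset_uIcc ht)).symm
  -- split the integral
  have hsplit : (∫ t in (0:ℝ)..1, f t) =
      (∫ t in (0:ℝ)..c1, f t) + (∫ t in c1..c2, f t) + (∫ t in c2..(1:ℝ), f t) := by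
    rw [intervalIntegral.integral_add_adjacent_intervals hi1 hi2,
      intervalIntegral.integral_add_adjacent_intervals (hi1.trans hi2) hi3]
  -- evaluate piece 1
  have hv1 : (∫ t in (0:ℝ)..c1, f t) = c1 / Real.sqrt (1 - c1 ^ 2) - 0 := by
    rw [intervalIntegral.integral_congr e1]
    have := intervalIntegral.integral_eq_sub_of_hasDeriv_right_of_le hc10
      (f := fun u : ℝ => u / Real.sqrt (1 - u ^ 2)) (f' := g1) ?_ ?_ (hg1c.intervalIntegrable)
    · simpa using this
    · apply ContinuousOn.div continuousOn_id hScont.continuousOn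
      intro x hx
      have : x ^ 2 < 1 := by nlinarith [hx.1, hx.2]
      exact (Real.sqrt_pos.2 (by linarith)).ne'
    · intro x hx
      have : x ^ 2 < 1 := by nlinarith [hx.1.le, hx.2]
      exact (dOct1 this).hasDerivWithinAt
  -- evaluate piece 2
  have hv2 : (∫ t in c1..c2, f t) =
      -((1 + b) ^ 5 * (1 - c2 ^ 2) ^ 2 / (4 * (c2 + Real.sqrt (1 - c2 ^ 2)) ^ 4)) -
      -((1 + b) ^ 5 * (1 - c1 ^ 2) ^ 2 / (4 * (c1 + Real.sqrt (1 - c1 ^ 2)) ^ 4)) := by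
    rw [intervalIntegral.integral_congr e2]
    apply intervalIntegral.integral_eq_sub_of_hasDeriv_right_of_le hc12
      (f := fun u : ℝ => -((1 + b) ^ 5 * (1 - u ^ 2) ^ 2 / (4 * (u + Real.sqrt (1 - u ^ 2)) ^ 4)))
      (f' := g2) ?_ ?_ (hg2c.intervalIntegrable)
    · apply ContinuousOn.neg
      apply ContinuousOn.div (by fun_prop) (by fun_prop)
      intro x hx
      have := (sOct_pos (le_trans hc10 hx.1) (le_trans hx.2 hc21)).ne'
      positivity
    · intro x hx
      have hx0 : 0 < x := lt_of_le_of_lt hc10 hx.1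
      have hxlt : x < 1 := lt_of_lt_of_le hx.2 hc21
      have hx1 : x ^ 2 < 1 := by nlinarith
      exact (dOct2 hx1 (by positivity)).hasDerivWithinAt
  -- evaluate piece 3
  have hv3 : (∫ t in c2..(1:ℝ), f t) =
      (2 * 1 ^ 2 - 1) / (4 * 1 ^ 4) - (2 * c2 ^ 2 - 1) / (4 * c2 ^ 4) := by
    rw [intervalIntegral.integral_congr e3]
    apply intervalIntegral.integral_eq_sub_of_hasDeriv_right_of_le hc21
      (f := fun u : ℝ => (2 * u ^ 2 - 1) / (4 * u ^ 4)) (f' := g3) ?_ ?_ (hg3c.intervalIntegrable)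
    · apply ContinuousOn.div (by fun_prop) (by fun_prop)
      intro x hx
      have := (lt_of_lt_of_le hc20 hx.1).ne'
      positivity
    · intro x hx
      exact (dOct3 (lt_of_lt_of_le hc20 hx.1.le).ne').hasDerivWithinAt
  -- put everything together
  have hbr : (1 : ℝ) + b ≠ 0 := by positivity
  have hv1' : c1 / Real.sqrt (1 - c1 ^ 2) - 0 = b := by
    rw [hsc1, hc1def]; field_simp; simp
  have hv2' : -((1 + b) ^ 5 * (1 - c2 ^ 2) ^ 2 / (4 * (c2 + Real.sqrt (1 - c2 ^ 2)) ^ 4)) -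
      -((1 + b) ^ 5 * (1 - c1 ^ 2) ^ 2 / (4 * (c1 + Real.sqrt (1 - c1 ^ 2)) ^ 4)) =
      (1 + b) * (1 - b ^ 4) / 4 := by
    rw [hsc1, hsc2, h1c1, h1c2, hc1def, hc2def]
    have h4 : r⁻¹ + b / r = (1 + b) / r := by field_simp
    have h5 : b / r + r⁻¹ = (1 + b) / r := by field_simp; ring
    rw [h4, h5]
    field_simp
    ring
  have hv3' : (2 * 1 ^ 2 - 1) / (4 * 1 ^ 4) - (2 * c2 ^ 2 - 1) / (4 * c2 ^ 4) = b ^ 4 / 4 := by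
    rw [hc2def]
    field_simp
    linear_combination (r ^ 2 + b ^ 2 - 1) * hr2
  rw [hsplit, hv1, hv2, hv3, hv1', hv2', hv3']
  ring
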